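/- arXiv:2206.07095 — 5 statements merged into one kernel-verified Lean document; each statement's English description precedes it below -/
import Mathlib

section
/- Suppose 5 is a unit in R, r is a root in R of x² − x − 1 = 0, and s := 1 − r (so r and s are units). Then the multiplicative order of the invertible matrix A = [[0, 1], [1, 1]] over R equals the least common multiple of the orders of r and s: ord(A) = lcm(ord(r), ord(s)). In particular A has infinite order if and only if r or s has infinite order. -/
theorem order_fib_matrix_eq_lcm {R : Type*} [CommRing R] (h1 : (1 : R) ≠ 0)
    (h5 : IsUnit (5 : R)) (r : R) (hr : r ^ 2 - r - 1 = 0) (s : R) (hs : s = 1 - r) :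
    orderOf (!![0, 1; 1, 1] : Matrix (Fin 2) (Fin 2) R) =
      Nat.lcm (orderOf r) (orderOf s) ∧
    (orderOf (!![0, 1; 1, 1] : Matrix (Fin 2) (Fin 2) R) = 0 ↔
      orderOf r = 0 ∨ orderOf s = 0) := by
  set A : Matrix (Fin 2) (Fin 2) R := !![0, 1; 1, 1] with hA
  set P : Matrix (Fin 2) (Fin 2) R := !![1, 1; r, s] with hP
  set D : Matrix (Fin 2) (Fin 2) R := !![r, 0; 0, s] with hD
  have hr2 : r ^ 2 = r + 1 := by linear_combination hr
  have hs2 : s ^ 2 = s + 1 := by rw [hs]; linear_combination hr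
  have hu : IsUnit (s - r) := by
    have h : (s - r) * (s - r) = 5 := by rw [hs]; linear_combination (4 : R) * hr
    exact isUnit_of_mul_isUnit_left (h ▸ h5)
  have hPdet : IsUnit P.det := by
    have : P.det = s - r := by simp [hP, Matrix.det_fin_two_of]
    rw [this]; exact hu
  have hPP : P * P⁻¹ = 1 := Matrix.mul_nonsing_inv _ hPdet
  have hPP' : P⁻¹ * P = 1 := Matrix.nonsing_inv_mul _ hPdet
  have hconj : A * P = P * D := by
    ext i j
    fin_cases i <;> fin_cases j <;>
      simp [hA, hP, hD, Matrix.mul_apply, Fin.sum_univ_two] <;>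
      first
        | linear_combination -hr2
        | linear_combination -hs2
  have hApow : ∀ n : ℕ, A ^ n = P * D ^ n * P⁻¹ := by
    intro n
    induction n with
    | zero => simp [hPP]
    | succ n ih =>
      have : A ^ (n + 1) = A * A ^ n := by rw [pow_succ']
      rw [this, ih, pow_succ']
      calc A * (P * D ^ n * P⁻¹) = (A * P) * D ^ n * P⁻¹ := by
            rw [Matrix.mul_assoc, Matrix.mul_assoc, Matrix.mul_assoc]
        _ = P * (D * D ^ n) * P⁻¹ := by rw [hconj, ← Matrix.mul_assoc]
  have hDpow : ∀ n : ℕ, D ^ n = !![r ^ n, 0; 0, s ^ n] := by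
    intro n
    induction n with
    | zero => simp [Matrix.one_fin_two]
    | succ n ih =>
      rw [pow_succ, ih]
      ext i j
      fin_cases i <;> fin_cases j <;>
        simp [hD, Matrix.mul_apply, Fin.sum_univ_two, pow_succ]
  have key : ∀ n : ℕ, A ^ n = 1 ↔ r ^ n = 1 ∧ s ^ n = 1 := by
    intro n
    rw [hApow n]
    constructor
    · intro h
      have hD1 : D ^ n = 1 := by
        have := congrArg (fun M => P⁻¹ * M * P) h
        rw [Matrix.mul_one, hPP', ← Matrix.mul_assoc, ← Matrix.mul_assoc, hPP',
          Matrix.one_mul, Matrix.mul_assoc, hPP', Matrix.mul_one] at this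
        exact this
      rw [hDpow n] at hD1
      have e1 := congrFun (congrFun hD1 0) 0
      have e2 := congrFun (congrFun hD1 1) 1
      simp [Matrix.one_apply] at e1 e2
      exact ⟨e1, e2⟩
    · rintro ⟨h1', h2'⟩
      have : D ^ n = 1 := by
        rw [hDpow n, h1', h2']
        ext i j
        fin_cases i <;> fin_cases j <;> simp [Matrix.one_apply]
      rw [this, Matrix.mul_one, hPP]
  have main : orderOf A = Nat.lcm (orderOf r) (orderOf s) := by
    apply Nat.dvd_antisymm
    · rw [orderOf_dvd_iff_pow_eq_one, key]
      exact ⟨orderOf_dvd_iff_pow_eq_one.1 (Nat.dvd_lcm_left _ _),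
        orderOf_dvd_iff_pow_eq_one.1 (Nat.dvd_lcm_right _ _)⟩
    · have h := (key (orderOf A)).1 (pow_orderOf_eq_one A)
      exact Nat.lcm_dvd (orderOf_dvd_iff_pow_eq_one.2 h.1)
        (orderOf_dvd_iff_pow_eq_one.2 h.2)
  refine ⟨main, ?_⟩
  rw [main]
  constructor
  · intro h
    by_contra hc
    push_neg at hc
    exact absurd h (Nat.lcm_ne_zero hc.1 hc.2)
  · rintro (h | h) <;> simp [h, Nat.lcm]
end

section
/- Suppose 5 is a unit in R, 2·1_R ≠ 0, r is a root in R of x² − x − 1 = 0 with s := 1 − r, and the multiplicative order of r is finite and odd. Then ord(s) = 2·ord(r), and the multiplicative order of the matrix A = [[0, 1], [1, 1]] over R (the Pisano period of the Fibonacci sequence in R) equals 2·ord(r). -/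
theorem pisano_odd_case {R : Type*} [CommRing R] (h1 : (1 : R) ≠ 0)
    (h5 : IsUnit (5 : R)) (h2 : (2 : R) ≠ 0)
    (r : R) (hr : r ^ 2 - r - 1 = 0) (s : R) (hs : s = 1 - r)
    (hfin : 0 < orderOf r) (hodd : Odd (orderOf r)) :
    orderOf s = 2 * orderOf r ∧
    orderOf (!![0, 1; 1, 1] : Matrix (Fin 2) (Fin 2) R) = 2 * orderOf r := by
  set n := orderOf r with hn
  have hrn : r ^ n = 1 := pow_orderOf_eq_one r
  have hrs : r * s = -1 := by rw [hs]; linear_combination -hr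
  have hneg : (-1 : R) ≠ 1 := by
    intro h; apply h2; linear_combination -h
  have hsn : s ^ n = -1 := by
    calc s ^ n = r ^ n * s ^ n := by rw [hrn, one_mul]
    _ = (r * s) ^ n := (mul_pow r s n).symm
    _ = (-1) ^ n := by rw [hrs]
    _ = -1 := hodd.neg_one_pow
  have hs2n : s ^ (2 * n) = 1 := by
    rw [mul_comm, pow_mul, hsn, neg_one_sq]
  have hcop : Nat.Coprime 2 n := by
    have h21 : n % 2 = 1 := Nat.odd_iff.mp hodd
    exact (Nat.prime_two.coprime_iff_not_dvd).mpr (by omega)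
  -- key divisibility
  have key : ∀ k, 0 < k → s ^ k = 1 → 2 * n ∣ k := by
    intro k hk hsk
    have hrk : r ^ k = (-1) ^ k := by
      calc r ^ k = r ^ k * s ^ k := by rw [hsk, mul_one]
      _ = (r * s) ^ k := (mul_pow r s k).symm
      _ = (-1) ^ k := by rw [hrs]
    rcases Nat.even_or_odd k with he | ho
    · have hr1 : r ^ k = 1 := by rw [hrk, he.neg_one_pow]
      have hnd : n ∣ k := orderOf_dvd_of_pow_eq_one hr1
      have h2d : 2 ∣ k := he.two_dvd
      exact Nat.Coprime.mul_dvd_of_dvd_of_dvd hcop h2d hnd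
    · exfalso
      have hr1 : r ^ k = -1 := by rw [hrk, ho.neg_one_pow]
      have h2k : r ^ (2 * k) = 1 := by
        rw [mul_comm, pow_mul, hr1, neg_one_sq]
      have hnd : n ∣ 2 * k := orderOf_dvd_of_pow_eq_one h2k
      have hnk : n ∣ k := hcop.symm.dvd_of_dvd_mul_left hnd
      have : r ^ k = 1 := orderOf_dvd_iff_pow_eq_one.mp hnk
      rw [hr1] at this
      exact hneg this
  have hords : orderOf s = 2 * n := by
    rw [orderOf_eq_iff (by omega)]
    refine ⟨hs2n, ?_⟩
    intro m hm hm0 heq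
    have := Nat.le_of_dvd hm0 (key m hm0 heq)
    omega
  refine ⟨hords, ?_⟩
  -- Matrix part
  set A : Matrix (Fin 2) (Fin 2) R := !![0, 1; 1, 1] with hA
  set P : Matrix (Fin 2) (Fin 2) R := !![1, 1; r, s] with hP
  set D : Matrix (Fin 2) (Fin 2) R := !![r, 0; 0, s] with hD
  have hs2 : s ^ 2 = s + 1 := by rw [hs]; linear_combination hr
  have hr2 : r ^ 2 = r + 1 := by linear_combination hr
  have hAP : A * P = P * D := by
    rw [hA, hP, hD]
    ext i j
    fin_cases i <;> fin_cases j <;>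
      simp [Matrix.mul_apply, Fin.sum_univ_two] <;>
      first
        | ring1
        | linear_combination (r - s) * hs - hr
        | linear_combination (s - r) * hs - hr
        | linear_combination (r - s) * hs + hr
        | linear_combination (s - r) * hs + hr
        | linear_combination hr
        | linear_combination -hr
        | linear_combination 2 * hr
        | linear_combination -2 * hr
        | linear_combination (r - s) * hs - 2 * hr
        | linear_combination (s - r) * hs - 2 * hr
        | linear_combination (r - s) * hs + 2 * hr
        | linear_combination (s - r) * hs + 2 * hr
        | linear_combination hs
        | linear_combination -hs
  have hdetP : IsUnit (s - r) := by
    obtain ⟨v, hv⟩ := h5.exists_right_inv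
    exact IsUnit.of_mul_eq_one (a := s - r) ((s - r) * v) (by rw [hs]; linear_combination 4 * v * hr + hv)
  have hPunit : IsUnit P := by
    rw [Matrix.isUnit_iff_isUnit_det, hP, Matrix.det_fin_two_of]
    simpa using hdetP
  have hsc : SemiconjBy P D A := hAP.symm
  have hDk : ∀ k : ℕ, D ^ k = !![r ^ k, 0; 0, s ^ k] := by
    intro k
    induction k with
    | zero => simp [Matrix.one_fin_two]
    | succ k ih =>
      rw [pow_succ, ih, hD]
      ext i j
      fin_cases i <;> fin_cases j <;>
        simp [Matrix.mul_apply, Fin.sum_univ_two, pow_succ]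
  have hiff : ∀ k : ℕ, A ^ k = 1 ↔ (r ^ k = 1 ∧ s ^ k = 1) := by
    intro k
    have hsck := (hsc.pow_right k)
    constructor
    · intro h
      have h2' : P * D ^ k = P * 1 := by
        rw [mul_one]
        calc P * D ^ k = A ^ k * P := hsck
        _ = P := by rw [h, one_mul]
      have hDk1 : D ^ k = 1 := hPunit.mul_left_cancel h2'
      rw [hDk k, Matrix.one_fin_two] at hDk1
      constructor
      · simpa using congrFun (congrFun hDk1 0) 0
      · simpa using congrFun (congrFun hDk1 1) 1
    · intro ⟨h1', h2'⟩
      have hDk1 : D ^ k = 1 := by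
        rw [hDk k, h1', h2', Matrix.one_fin_two]
      have hcanc : A ^ k * P = 1 * P := by
        rw [one_mul, ← hsck, hDk1, mul_one]
      exact hPunit.mul_right_cancel hcanc
  rw [orderOf_eq_iff (by omega)]
  constructor
  · rw [hiff]
    refine ⟨?_, hs2n⟩
    rw [mul_comm, pow_mul, hrn, one_pow]
  · intro m hm hm0 heq
    rw [hiff] at heq
    have := Nat.le_of_dvd hm0 (key m hm0 heq.2)
    omega
end

section
/- Suppose 5 is a unit in R, r is a root in R of x² − x − 1 = 0 with s := 1 − r, and the multiplicative orders of r and s are both finite (positive) and even. Then ord(r) = ord(s), and the multiplicative order of the matrix A = [[0, 1], [1, 1]] over R (the Pisano period of the Fibonacci sequence in R) equals ord(r). -/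
theorem pisano_even_case {R : Type*} [CommRing R] (h1 : (1 : R) ≠ 0)
    (h5 : IsUnit (5 : R)) (r : R) (hr : r ^ 2 - r - 1 = 0) (s : R) (hs : s = 1 - r)
    (hrfin : 0 < orderOf r) (hsfin : 0 < orderOf s)
    (hreven : Even (orderOf r)) (hseven : Even (orderOf s)) :
    orderOf r = orderOf s ∧
    orderOf (!![0, 1; 1, 1] : Matrix (Fin 2) (Fin 2) R) = orderOf r := by
  subst hs
  have hrs : r * (1 - r) = -1 := by linear_combination -hr
  have key : ∀ a b : R, a * b = -1 → Even (orderOf a) → orderOf b ∣ orderOf a := by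
    intro a b hab hev
    rw [orderOf_dvd_iff_pow_eq_one]
    have h1' : (a * b) ^ orderOf a = 1 := by rw [hab]; exact hev.neg_one_pow
    rw [mul_pow, pow_orderOf_eq_one, one_mul] at h1'
    exact h1'
  have hsr : (1 - r) * r = -1 := by rw [mul_comm]; exact hrs
  have heq : orderOf r = orderOf (1 - r) :=
    Nat.dvd_antisymm (key (1 - r) r hsr hseven) (key r (1 - r) hrs hreven)
  refine ⟨heq, ?_⟩
  set A : Matrix (Fin 2) (Fin 2) R := !![0, 1; 1, 1] with hA
  set D : Matrix (Fin 2) (Fin 2) R := Matrix.diagonal ![r, 1 - r] with hD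
  set P : Matrix (Fin 2) (Fin 2) R := !![1, 1; r, 1 - r] with hP
  obtain ⟨w, hw⟩ := h5.exists_right_inv
  have hdet : IsUnit P.det := by
    have hdP : P.det = 1 - 2 * r := by rw [hP, Matrix.det_fin_two_of]; ring
    rw [hdP]
    exact IsUnit.of_mul_eq_one ((1 - 2 * r) * w) (by linear_combination 4 * w * hr + hw)
  obtain ⟨u, hu⟩ := (Matrix.isUnit_iff_isUnit_det P).mpr hdet
  have hAP : A * P = P * D := by
    ext i j
    fin_cases i <;> fin_cases j <;>
      simp [hA, hP, hD, Matrix.mul_apply, Fin.sum_univ_two, Matrix.diagonal] <;>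
      first | linear_combination -hr | linear_combination hr | ring
  have hconj : A = (u : Matrix (Fin 2) (Fin 2) R) * D * (↑u⁻¹ : Matrix (Fin 2) (Fin 2) R) := by
    rw [Units.eq_mul_inv_iff_mul_eq, hu, hAP]
  have hAD : orderOf A = orderOf D := by
    rw [orderOf_eq_orderOf_iff]
    intro n
    rw [hconj, Units.conj_pow]
    constructor
    · intro h
      have := congrArg (fun m => (↑u⁻¹ : Matrix (Fin 2) (Fin 2) R) * m * (u : Matrix (Fin 2) (Fin 2) R)) h
      simpa [mul_assoc, ← mul_assoc, Units.inv_mul, Units.mul_inv] using this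
    · intro h; rw [h, mul_one, Units.mul_inv]
  rw [hAD, orderOf_eq_orderOf_iff]
  intro n
  rw [hD, Matrix.diagonal_pow, ← Matrix.diagonal_one,
    (Matrix.diagonal_injective).eq_iff, funext_iff, Fin.forall_fin_two]
  simp only [Pi.pow_apply, Pi.one_apply, Matrix.cons_val_zero, Matrix.cons_val_one,
    Matrix.head_cons]
  constructor
  · exact fun h => h.1
  · intro h
    refine ⟨h, ?_⟩
    rw [← orderOf_dvd_iff_pow_eq_one] at h ⊢
    rwa [← heq]
end

section
/- Suppose 2·1_R ≠ 0 in R, r is a root in R of x² − x − 1 = 0 with s := 1 − r, and the multiplicative order of r is finite and odd. Then the multiplicative order of s is even. -/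
/-!
Since `r * s = -1`, an odd order `m` of `s` would give `r ^ m = (r * s) ^ m = -1`. As `2 ≠ 0`,
`-1` has order two, and the order of a power of `r` divides the order of `r`, which would make
the order of `r` even.
-/

theorem pow_orderOf_eq_neg_one_of_mul_eq_neg_one {M : Type*} [CommMonoid M] [HasDistribNeg M]
    {x y : M} (hxy : x * y = -1) (hy : Odd (orderOf y)) : x ^ orderOf y = -1 := by
  calc x ^ orderOf y = (x * y) ^ orderOf y := by rw [mul_pow, pow_orderOf_eq_one, mul_one]
    _ = -1 := by rw [hxy, hy.neg_one_pow]

theorem even_orderOf_of_pow_eq_neg_one {M : Type*} [Monoid M] [HasDistribNeg M] {x : M} {n : ℕ}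
    (hM : (-1 : M) ≠ 1) (hx : x ^ n = -1) : Even (orderOf x) := by
  have horder : orderOf (x ^ n) = 2 := orderOf_eq_prime (by rw [hx, neg_one_sq]) (hx ▸ hM)
  exact even_iff_two_dvd.mpr (horder ▸ orderOf_pow_dvd n)

theorem order_s_even_of_order_r_odd_general {R : Type*} [CommRing R]
    (h2 : (2 : R) ≠ 0) (r : R) (hr : r ^ 2 - r - 1 = 0) (s : R) (hs : s = 1 - r)
    (hodd : Odd (orderOf r)) :
    Even (orderOf s) := by
  have hrs : r * s = -1 := by rw [hs]; linear_combination -hr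
  have hneg : (-1 : R) ≠ 1 := fun h ↦ h2 (by linear_combination -h)
  by_contra hs_even
  have hr_even : Even (orderOf r) := even_orderOf_of_pow_eq_neg_one hneg
    (pow_orderOf_eq_neg_one_of_mul_eq_neg_one hrs (Nat.not_even_iff_odd.mp hs_even))
  exact Nat.not_even_iff_odd.mpr hodd hr_even

theorem order_s_even_of_order_r_odd {R : Type*} [CommRing R] (h1 : (1 : R) ≠ 0)
    (h2 : (2 : R) ≠ 0) (r : R) (hr : r ^ 2 - r - 1 = 0) (s : R) (hs : s = 1 - r)
    (hfin : 0 < orderOf r) (hodd : Odd (orderOf r)) :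
    Even (orderOf s) :=
  order_s_even_of_order_r_odd_general h2 r hr s hs hodd
end

section
/- For every natural number p, the Fibonacci sequence in R satisfies F_{n+p} = F_n for all n if and only if A^p = 1, where A is the 2×2 matrix [[0, 1], [1, 1]] over R. -/
/-!
The powers of `A` are `A ^ n = !![F (n - 1), F n; F n, F (n + 1)]`, so `A ^ p = 1` means exactly
`F p = 0` and `F (p + 1) = 1`. Since the Fibonacci recurrence has order two, these two initial
values are also exactly what makes the shifted sequence `n ↦ F (n + p)` equal to `F`.
-/

def fibR (R : Type*) [CommRing R] : ℕ → R
  | 0 => 0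
  | 1 => 1
  | (n + 2) => fibR R n + fibR R (n + 1)

namespace fibR

variable {R : Type*} [CommRing R]

@[simp] lemma zero : fibR R 0 = 0 := rfl

@[simp] lemma one : fibR R 1 = 1 := rfl

lemma add_two (n : ℕ) : fibR R (n + 2) = fibR R n + fibR R (n + 1) := rfl

lemma eq_of_recurrence {u : ℕ → R} (h0 : u 0 = 0) (h1 : u 1 = 1)
    (hrec : ∀ n, u (n + 2) = u n + u (n + 1)) (n : ℕ) : u n = fibR R n := by
  induction n using Nat.twoStepInduction with
  | zero => exact h0
  | one => exact h1
  | more n ih₀ ih₁ => rw [hrec, add_two, ih₀, ih₁]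

lemma periodic_iff (p : ℕ) :
    (∀ n, fibR R (n + p) = fibR R n) ↔ fibR R p = 0 ∧ fibR R (p + 1) = 1 := by
  refine ⟨fun h => ⟨by simpa using h 0, by simpa [add_comm] using h 1⟩, ?_⟩
  rintro ⟨hp, hp1⟩ n
  refine eq_of_recurrence (u := fun m => fibR R (m + p)) (by simpa) (by rwa [add_comm])
    (fun m => ?_) n
  rw [show m + 2 + p = m + p + 2 by omega, add_two, add_right_comm]

-- The corner entry `F (n - 1)` is written `F (n + 1) - F n`, which avoids truncated subtraction.
lemma matrix_pow (n : ℕ) :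
    (!![0, 1; 1, 1] : Matrix (Fin 2) (Fin 2) R) ^ n =
      !![fibR R (n + 1) - fibR R n, fibR R n; fibR R n, fibR R (n + 1)] := by
  induction n with
  | zero => simp [Matrix.one_fin_two]
  | succ n ih =>
    rw [pow_succ, ih, Matrix.mul_fin_two, add_two]
    simp

lemma matrix_pow_eq_one_iff (p : ℕ) :
    (!![0, 1; 1, 1] : Matrix (Fin 2) (Fin 2) R) ^ p = 1 ↔
      fibR R p = 0 ∧ fibR R (p + 1) = 1 := by
  rw [matrix_pow, Matrix.one_fin_two, ← Matrix.ext_iff]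
  simp +contextual [Fin.forall_fin_two]

end fibR

theorem fib_period_iff_matrix_pow_eq_one_general {R : Type*} [CommRing R]
    (p : ℕ) :
    (∀ n : ℕ, fibR R (n + p) = fibR R n) ↔
    (!![0, 1; 1, 1] : Matrix (Fin 2) (Fin 2) R) ^ p = 1 :=
  (fibR.periodic_iff p).trans (fibR.matrix_pow_eq_one_iff p).symm

theorem fib_period_iff_matrix_pow_eq_one {R : Type*} [CommRing R] (h1 : (1 : R) ≠ 0)
    (p : ℕ) :
    (∀ n : ℕ, fibR R (n + p) = fibR R n) ↔
    (!![0, 1; 1, 1] : Matrix (Fin 2) (Fin 2) R) ^ p = 1 :=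
  fib_period_iff_matrix_pow_eq_one_general p
end
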